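/- Let C be a left weak H-module coalgebra over a weak Hopf algebra H, and define ε̃_C: C → R = Im(Π^L) by ε̃_C(c) = ε_C(1_{(1)}·c) 1_{(2)}. Then ε̃_C is left H-linear: ε̃_C(h·c) = h ▷ ε̃_C(c) = Π^L(h s_H(ε̃_C(c))) for all h ∈ H, c ∈ C, where h ▷ r = Π^L(h r) for r ∈ R. -/

import Mathlib

open TensorProduct LinearMap MulOpposite

noncomputable section
namespace DK

variable (k : Type*) [CommRing k] (H : Type*) [Ring H] [Algebra k H]

/-- Given `u = Σ xᵢ ⊗ bᵢ ∈ H ⊗ B` and `ε : H → k`, the linear map `g ↦ Σ ε(xᵢ * g) • bᵢ`. -/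
def coPi (B : Type*) [AddCommGroup B] [Module k B] (ε : H →ₗ[k] k) (u : H ⊗[k] B) :
    H →ₗ[k] B :=
  ((TensorProduct.lid k B).toLinearMap
      ∘ₗ LinearMap.rTensor B (ε ∘ₗ LinearMap.mul' k H)
      ∘ₗ (TensorProduct.assoc k H H B).symm.toLinearMap
      ∘ₗ LinearMap.lTensor H (TensorProduct.comm k B H).toLinearMap
      ∘ₗ (TensorProduct.assoc k H B H).toLinearMap)
    ∘ₗ TensorProduct.mk k (H ⊗[k] B) H u

/-- Given `u = Σ bᵢ ⊗ xᵢ ∈ B ⊗ H` and `ε : H → k`, the linear map `g ↦ Σ ε(g * xᵢ) • bᵢ`. -/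
def coPiR (B : Type*) [AddCommGroup B] [Module k B] (ε : H →ₗ[k] k) (u : B ⊗[k] H) :
    H →ₗ[k] B :=
  ((TensorProduct.rid k B).toLinearMap
      ∘ₗ LinearMap.lTensor B (ε ∘ₗ LinearMap.mul' k H ∘ₗ (TensorProduct.comm k H H).toLinearMap)
      ∘ₗ (TensorProduct.assoc k B H H).toLinearMap)
    ∘ₗ TensorProduct.mk k (B ⊗[k] H) H u

variable (Δ : H →ₗ[k] H ⊗[k] H) (ε : H →ₗ[k] k)

/-- `Π^L(g) = ε(1₍₁₎ g) • 1₍₂₎`. -/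
def PiL : H →ₗ[k] H := coPi k H H ε (Δ 1)

/-- `Π^R(g) = ε(g 1₍₂₎) • 1₍₁₎`. -/
def PiR : H →ₗ[k] H := coPiR k H H ε (Δ 1)

/-- the map `h₍₁₎ ε(g h₍₂₎)` as a function of the input of `Δ`, i.e.
`u = Σ aᵢ ⊗ bᵢ ↦ Σ ε(g bᵢ) • aᵢ`. -/
def PiRmap (g : H) : H ⊗[k] H →ₗ[k] H :=
  (TensorProduct.rid k H).toLinearMap ∘ₗ LinearMap.lTensor H (ε ∘ₗ LinearMap.mulLeft k g)

/-- `(a ⊗ b) ↦ ε(x a) * ε(b z)`. -/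
def eps2 (x z : H) : H ⊗[k] H →ₗ[k] k :=
  (TensorProduct.lid k k).toLinearMap
    ∘ₗ TensorProduct.map (ε ∘ₗ LinearMap.mulLeft k x) (ε ∘ₗ LinearMap.mulRight k z)

/-- `(a ⊗ b) ↦ ε(a z) * ε(x b)`. -/
def eps2' (x z : H) : H ⊗[k] H →ₗ[k] k :=
  (TensorProduct.lid k k).toLinearMap
    ∘ₗ TensorProduct.map (ε ∘ₗ LinearMap.mulRight k z) (ε ∘ₗ LinearMap.mulLeft k x)

/-- The weak bialgebra axioms for `(H, ·, Δ, ε)`: `Δ` is a multiplicative coassociative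
counital coproduct, the weak counit axiom
`ε(xyz) = ε(x y₍₁₎) ε(y₍₂₎ z) = ε(x y₍₂₎) ε(y₍₁₎ z)` holds, and the weak unit axiom
`(Δ ⊗ id)Δ(1) = (Δ(1) ⊗ 1)(1 ⊗ Δ(1)) = (1 ⊗ Δ(1))(Δ(1) ⊗ 1)` holds. -/
def IsWeakBialgebra : Prop :=
  (∀ x y : H, Δ (x * y) = Δ x * Δ y) ∧
  (∀ h : H, (TensorProduct.assoc k H H H) ((LinearMap.rTensor H Δ) (Δ h)) =
      (LinearMap.lTensor H Δ) (Δ h)) ∧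
  (∀ h : H, (TensorProduct.lid k H) ((LinearMap.rTensor H ε) (Δ h)) = h) ∧
  (∀ h : H, (TensorProduct.rid k H) ((LinearMap.lTensor H ε) (Δ h)) = h) ∧
  (∀ x y z : H, ε (x * y * z) = eps2 k H ε x z (Δ y)) ∧
  (∀ x y z : H, ε (x * y * z) = eps2' k H ε x z (Δ y)) ∧
  ((LinearMap.lTensor H Δ) (Δ 1) =
      (TensorProduct.assoc k H H H) ((Δ 1) ⊗ₜ[k] (1 : H)) * ((1 : H) ⊗ₜ[k] (Δ 1))) ∧
  ((LinearMap.lTensor H Δ) (Δ 1) =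
      ((1 : H) ⊗ₜ[k] (Δ 1)) * (TensorProduct.assoc k H H H) ((Δ 1) ⊗ₜ[k] (1 : H)))

variable (S : H →ₗ[k] H)

/-- The weak Hopf algebra axioms: `H` is a weak bialgebra with antipode `S` satisfying
`h₍₁₎ S(h₍₂₎) = Π^L(h)`, `S(h₍₁₎) h₍₂₎ = Π^R(h)` and `S(h₍₁₎) h₍₂₎ S(h₍₃₎) = S(h)`. -/
def IsWeakHopf : Prop :=
  IsWeakBialgebra k H Δ ε ∧
  (∀ h : H, LinearMap.mul' k H ((LinearMap.lTensor H S) (Δ h)) = PiL k H Δ ε h) ∧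
  (∀ h : H, LinearMap.mul' k H ((LinearMap.rTensor H S) (Δ h)) = PiR k H Δ ε h) ∧
  (∀ h : H,
    (LinearMap.mul' k H ∘ₗ LinearMap.lTensor H (LinearMap.mul' k H))
        ((TensorProduct.map S (TensorProduct.map LinearMap.id S))
          ((LinearMap.lTensor H Δ) (Δ h))) = S h)

end DK
end
noncomputable section
namespace DK
open TensorProduct LinearMap

variable (k : Type*) [CommRing k] (H : Type*) [Ring H] [Algebra k H]
  (Δ : H →ₗ[k] H ⊗[k] H) (ε : H →ₗ[k] k)
  (C : Type*) [AddCommGroup C] [Module k C]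
  (act : H →ₗ[k] C →ₗ[k] C) (ΔC : C →ₗ[k] C ⊗[k] C) (εC : C →ₗ[k] k)

/-- Evaluation `H ⊗ C → C` of the action. -/
def evC : H ⊗[k] C →ₗ[k] C := TensorProduct.lift act

/-- Diagonal action `(g ⊗ g') ⊗ (c ⊗ c') ↦ g·c ⊗ g'·c'`. -/
def Psi2 : (H ⊗[k] H) ⊗[k] (C ⊗[k] C) →ₗ[k] C ⊗[k] C :=
  TensorProduct.map (evC k H C act) (evC k H C act) ∘ₗ
    (TensorProduct.tensorTensorTensorComm k H H C C).toLinearMap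

/-- `C` is a left weak `H`-module coalgebra: a `k`-coalgebra with a left `H`-action such
that `Δ_C(h·c) = h₍₁₎·c₍₁₎ ⊗ h₍₂₎·c₍₂₎` and `ε_C(hg·c) = ε_H(h g₍₂₎) ε_C(g₍₁₎·c)`. -/
def IsWeakModuleCoalgebra : Prop :=
  (∀ c : C, (TensorProduct.assoc k C C C) ((LinearMap.rTensor C ΔC) (ΔC c)) =
      (LinearMap.lTensor C ΔC) (ΔC c)) ∧
  (∀ c : C, (TensorProduct.lid k C) ((LinearMap.rTensor C εC) (ΔC c)) = c) ∧
  (∀ c : C, (TensorProduct.rid k C) ((LinearMap.lTensor C εC) (ΔC c)) = c) ∧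
  (∀ (g h : H) (c : C), act (g * h) c = act g (act h c)) ∧
  (∀ c : C, act 1 c = c) ∧
  (∀ (h : H) (c : C), ΔC (act h c) = (Psi2 k H C act) ((Δ h) ⊗ₜ[k] (ΔC c))) ∧
  (∀ (h g : H) (c : C), εC (act (h * g) c) =
    (TensorProduct.lid k k)
      ((TensorProduct.map (εC ∘ₗ act.flip c) (ε ∘ₗ LinearMap.mulLeft k h)) (Δ g)))

/-- The counit `ε̃_C : C → R ⊆ H`, `c ↦ ε_C(1₍₁₎ · c) 1₍₂₎`. -/
def etil : C →ₗ[k] H :=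
  ((TensorProduct.lid k H).toLinearMap
      ∘ₗ LinearMap.rTensor H (εC ∘ₗ evC k H C act)
      ∘ₗ (TensorProduct.assoc k H C H).symm.toLinearMap
      ∘ₗ LinearMap.lTensor H (TensorProduct.comm k H C).toLinearMap
      ∘ₗ (TensorProduct.assoc k H H C).toLinearMap)
    ∘ₗ TensorProduct.mk k (H ⊗[k] H) C (Δ 1)

end DK
end

/-! Both sides are `Δ(1)` contracted on its first leg with a functional on `H`, namely
`x ↦ ε_C(x·(h·c))` and `x ↦ ε(x h ε̃_C(c))`. They agree because the counit axiom with `g = 1`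
gives `ε(y ε̃_C(c)) = ε_C(y·c)`. -/

namespace DK

variable {k : Type*} [CommRing k] {H : Type*} [Ring H] [Algebra k H]
  {Δ : H →ₗ[k] H ⊗[k] H} {ε : H →ₗ[k] k}
  {C : Type*} [AddCommGroup C] [Module k C]
  {act : H →ₗ[k] C →ₗ[k] C} {ΔC : C →ₗ[k] C ⊗[k] C} {εC : C →ₗ[k] k}

lemma etil_apply (c : C) :
    etil k H Δ C act εC c = TensorProduct.lid k H (rTensor H (εC ∘ₗ act.flip c) (Δ 1)) := by
  simp only [etil, coe_comp, Function.comp_apply, mk_apply]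
  induction Δ 1 using TensorProduct.induction_on with
  | zero => simp
  | tmul x y => simp [evC]
  | add u v hu hv => simp only [add_tmul, map_add, hu, hv]

lemma PiL_apply (g : H) :
    PiL k H Δ ε g = TensorProduct.lid k H (rTensor H (ε ∘ₗ mulRight k g) (Δ 1)) := by
  simp only [PiL, coPi, coe_comp, Function.comp_apply, mk_apply]
  induction Δ 1 using TensorProduct.induction_on with
  | zero => simp
  | tmul x y => simp
  | add u v hu hv => simp only [add_tmul, map_add, hu, hv]

lemma apply_mul_lid_rTensor (ψ : H →ₗ[k] k) (y : H) (φ : H →ₗ[k] k) (u : H ⊗[k] H) :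
    ψ (y * TensorProduct.lid k H (rTensor H φ u)) =
      TensorProduct.lid k k (TensorProduct.map φ (ψ ∘ₗ mulLeft k y) u) := by
  induction u using TensorProduct.induction_on with
  | zero => simp
  | tmul x z => simp
  | add u v hu hv => simp only [map_add, mul_add, hu, hv]

lemma counit_mul_etil (hC : IsWeakModuleCoalgebra k H Δ ε C act ΔC εC) (y : H) (c : C) :
    ε (y * etil k H Δ C act εC c) = εC (act y c) := by
  rw [etil_apply, apply_mul_lid_rTensor, ← hC.2.2.2.2.2.2 y 1 c, mul_one]

end DK

theorem stmt15_general (k : Type*) [CommRing k] (H : Type*) [Ring H] [Algebra k H]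
    (Δ : H →ₗ[k] H ⊗[k] H) (ε : H →ₗ[k] k)
    (C : Type*) [AddCommGroup C] [Module k C]
    (act : H →ₗ[k] C →ₗ[k] C) (ΔC : C →ₗ[k] C ⊗[k] C) (εC : C →ₗ[k] k)
    (hC : DK.IsWeakModuleCoalgebra k H Δ ε C act ΔC εC) :
    ∀ (h : H) (c : C),
      DK.etil k H Δ C act εC (act h c) =
        DK.PiL k H Δ ε (h * DK.etil k H Δ C act εC c) := by
  intro h c
  have functionals_eq :
      εC ∘ₗ act.flip (act h c) = ε ∘ₗ mulRight k (h * DK.etil k H Δ C act εC c) := by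
    ext x
    rw [coe_comp, Function.comp_apply, flip_apply, coe_comp, Function.comp_apply,
      mulRight_apply, ← mul_assoc, DK.counit_mul_etil hC, hC.2.2.2.1]
  rw [DK.etil_apply, DK.PiL_apply, functionals_eq]

/-- Let `C` be a left weak `H`-module coalgebra over a weak Hopf algebra `H`
and define `ε̃_C : C → R = Im Π^L` by `ε̃_C(c) = ε_C(1₍₁₎·c) 1₍₂₎`.  Then `ε̃_C` is left
`H`-linear: `ε̃_C(h·c) = h ▷ ε̃_C(c) = Π^L(h s_H(ε̃_C(c)))` (with `s_H` the inclusion of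
`R` and `h ▷ r = Π^L(h r)` for `r ∈ R`). -/
theorem stmt15 (k : Type*) [CommRing k] (H : Type*) [Ring H] [Algebra k H]
    (Δ : H →ₗ[k] H ⊗[k] H) (ε : H →ₗ[k] k) (S : H →ₗ[k] H)
    (C : Type*) [AddCommGroup C] [Module k C]
    (act : H →ₗ[k] C →ₗ[k] C) (ΔC : C →ₗ[k] C ⊗[k] C) (εC : C →ₗ[k] k)
    (hwh : DK.IsWeakHopf k H Δ ε S)
    (hC : DK.IsWeakModuleCoalgebra k H Δ ε C act ΔC εC) :
    ∀ (h : H) (c : C),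
      DK.etil k H Δ C act εC (act h c) =
        DK.PiL k H Δ ε (h * DK.etil k H Δ C act εC c) :=
  stmt15_general k H Δ ε C act ΔC εC hC
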